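/- arXiv:math/0002234 — 2 statements merged into one kernel-verified Lean document; each statement's English description precedes it below -/
import Mathlib

section
/- With the dilation V(λ) of the previous construction, for any unimodular λ₁, …, λₙ and h ∈ H (embedded as (…,0,0,h) ∈ K₊), the H-component of V(λ₁)⋯V(λₙ)h equals T(λ₁)⋯T(λₙ)h; hence V(λ) is a uniform dilation of T(λ): P_H V(λ₁)⋯V(λₙ)|_H = T(λ₁)⋯T(λₙ). -/
theorem ContinuousLinearMap.semiconj_listProd_map {R E F ι : Type*} [Semiring R]
    [TopologicalSpace E] [AddCommMonoid E] [Module R E]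
    [TopologicalSpace F] [AddCommMonoid F] [Module R F]
    (π : E → F) (V : ι → E →L[R] E) (A : ι → F →L[R] F) :
    ∀ l : List ι, (∀ z ∈ l, Function.Semiconj π (V z) (A z)) →
      Function.Semiconj π (l.map V).prod (l.map A).prod
  | [], _ => Function.Semiconj.id_right
  | z :: l, hl => by
    simp only [List.map_cons, List.prod_cons, FunLike.coe_mul_eq_comp]
    exact (hl z List.mem_cons_self).comp_right
      (semiconj_listProd_map π V A l fun w hw => hl w (List.mem_cons_of_mem z hw))

theorem canonical_isometric_dilation_uniform_general
    {H Y : Type*} [NormedAddCommGroup H] [InnerProductSpace ℂ H]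
    [NormedAddCommGroup Y] [InnerProductSpace ℂ Y]
    (T₀ T₁ : H →L[ℂ] H) (F₀ F₁ : H →L[ℂ] Y)
    (V : ℂ → (WithLp 2 ((lp (fun _ : ℕ => Y) 2) × H)
      →L[ℂ] WithLp 2 ((lp (fun _ : ℕ => Y) 2) × H)))
    (hV : ∀ z : ℂ, ‖z‖ = 1 → ∀ (f : lp (fun _ : ℕ => Y) 2) (h : H),
      ((WithLp.equiv 2 _ (V z ((WithLp.equiv 2 _).symm (f, h)))).1 0 = F₀ h + z • F₁ h) ∧
      (∀ n : ℕ, (WithLp.equiv 2 _ (V z ((WithLp.equiv 2 _).symm (f, h)))).1 (n + 1) = f n) ∧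
      (WithLp.equiv 2 _ (V z ((WithLp.equiv 2 _).symm (f, h)))).2 = T₀ h + z • T₁ h) :
    ∀ l : List ℂ, (∀ z ∈ l, ‖z‖ = 1) → ∀ h : H,
      (WithLp.equiv 2 _ ((l.map V).prod ((WithLp.equiv 2 _).symm (0, h)))).2
        = (l.map (fun z => T₀ + z • T₁)).prod h := by
  intro l hl h
  have hsemiconj : ∀ z ∈ l, ∀ x, (WithLp.equiv 2 _ (V z x)).2
      = (T₀ + z • T₁) (WithLp.equiv 2 _ x).2 := fun z hz x =>
    (hV z (hl z hz) (WithLp.equiv 2 _ x).1 (WithLp.equiv 2 _ x).2).2.2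
  exact ContinuousLinearMap.semiconj_listProd_map (fun x => (WithLp.equiv 2 _ x).2) V
    (fun z => T₀ + z • T₁) l hsemiconj ((WithLp.equiv 2 _).symm (0, h))

/-- With the canonical isometric dilation `V(λ)` on
`K₊ = (⊕_{n<0} Y) ⊕ H`, for any unimodular `λ₁, …, λₙ` and `h ∈ H` (embedded
as `(…,0,0,h)`), the `H`-component of `V(λ₁)⋯V(λₙ)h` equals
`T(λ₁)⋯T(λₙ)h`; hence `V(λ)` is a uniform dilation of `T(λ)`. -/
theorem canonical_isometric_dilation_uniform
    {H Y : Type*} [NormedAddCommGroup H] [InnerProductSpace ℂ H] [CompleteSpace H]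
    [NormedAddCommGroup Y] [InnerProductSpace ℂ Y] [CompleteSpace Y]
    (T₀ T₁ : H →L[ℂ] H) (F₀ F₁ : H →L[ℂ] Y)
    (hcontr : ∀ z : ℂ, ‖z‖ = 1 → ∀ h : H, ‖T₀ h + z • T₁ h‖ ≤ ‖h‖)
    (hF : ∀ z : ℂ, ‖z‖ = 1 → ∀ h : H,
      ‖F₀ h + z • F₁ h‖ ^ 2 = ‖h‖ ^ 2 - ‖T₀ h + z • T₁ h‖ ^ 2)
    (V : ℂ → (WithLp 2 ((lp (fun _ : ℕ => Y) 2) × H)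
      →L[ℂ] WithLp 2 ((lp (fun _ : ℕ => Y) 2) × H)))
    (hV : ∀ z : ℂ, ‖z‖ = 1 → ∀ (f : lp (fun _ : ℕ => Y) 2) (h : H),
      ((WithLp.equiv 2 _ (V z ((WithLp.equiv 2 _).symm (f, h)))).1 0 = F₀ h + z • F₁ h) ∧
      (∀ n : ℕ, (WithLp.equiv 2 _ (V z ((WithLp.equiv 2 _).symm (f, h)))).1 (n + 1) = f n) ∧
      (WithLp.equiv 2 _ (V z ((WithLp.equiv 2 _).symm (f, h)))).2 = T₀ h + z • T₁ h) :
    ∀ l : List ℂ, (∀ z ∈ l, ‖z‖ = 1) → ∀ h : H,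
      (WithLp.equiv 2 _ ((l.map V).prod ((WithLp.equiv 2 _).symm (0, h)))).2
        = (l.map (fun z => T₀ + z • T₁)).prod h :=
  canonical_isometric_dilation_uniform_general T₀ T₁ F₀ F₁ V hV
end

section
/- In ℓ²(ℤ_{≤0}, ℂ), define for unimodular λ the operator Ṽ(λ) whose action on the standard basis is: Ṽ(λ)e_{−n} = e_{−n−1} for n ≥ 3, Ṽ(λ)e_{−2} = (1/√2)e_{−3} + (1/√2)e_{−2}, Ṽ(λ)e_{−1} = (λ/√2)e_{−3} + (λ/√2)e_{0}, Ṽ(λ)e_{0} = (λ/√2)e_{−2} + (1/√2)e_{−1} (per the matrix in the paper). Then Ṽ(λ) is an isometry for each unimodular λ, and P_{ℂe₀}Ṽ(λ)ⁿe₀ = 0 for all n ≥ 1, yet P_{ℂe₀}Ṽ(−1)Ṽ(1)e₀ = −e₀ ≠ 0. Hence Ṽ(λ) is an isometric dilation of the zero pencil T(λ) = 0 on ℂ which is not a uniform dilation. -/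
/-!
`Ṽ(λ)` maps the standard basis of `ℓ²` to an orthonormal family, so `Ṽ(λ)*Ṽ(λ)` agrees with the
identity on a set with dense span and `Ṽ(λ)` is an isometry. `Ṽ(λ)e₀` has no `e₀`-component,
`Ṽ(λ)²e₀ = λe_{−3}`, and from there on `Ṽ(λ)` only shifts, so no power of `Ṽ(λ)` returns to `e₀`.
Mixing two parameters breaks this: the `e₀`-coefficient of `Ṽ(μ)Ṽ(λ)e₀` is `(μ − λ)/2`.
-/

open scoped lp ComplexConjugate

section
variable {ι 𝕜 E F : Type*} [RCLike 𝕜] [NormedAddCommGroup E] [InnerProductSpace 𝕜 E]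
  [CompleteSpace E] [NormedAddCommGroup F] [InnerProductSpace 𝕜 F] [CompleteSpace F]

theorem HilbertBasis.norm_map_of_orthonormal_comp (b : HilbertBasis ι 𝕜 E) {V : E →L[𝕜] F}
    (hV : Orthonormal 𝕜 (V ∘ b)) (x : E) : ‖V x‖ = ‖x‖ := by
  classical
  refine V.norm_map_iff_adjoint_comp_self.mpr ?_ x
  refine ContinuousLinearMap.ext_on (s := Set.range b)
    (Submodule.dense_iff_topologicalClosure_eq_top.mpr b.dense_span) ?_
  rintro _ ⟨j, rfl⟩
  refine b.repr.injective (lp.ext (funext fun i => ?_))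
  rw [b.repr_apply_apply, b.repr_apply_apply, ContinuousLinearMap.comp_apply,
    ContinuousLinearMap.adjoint_inner_right, one_apply_eq_self]
  exact (orthonormal_iff_ite.mp hV i j).trans (orthonormal_iff_ite.mp b.orthonormal i j).symm

theorem lp.norm_map_of_orthonormal_single [DecidableEq ι] {V : ℓ²(ι, 𝕜) →L[𝕜] F}
    (hV : Orthonormal 𝕜 fun i => V (lp.single 2 i 1)) (x : ℓ²(ι, 𝕜)) : ‖V x‖ = ‖x‖ := by
  refine (default : HilbertBasis ι 𝕜 ℓ²(ι, 𝕜)).norm_map_of_orthonormal_comp ?_ x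
  convert hV using 2 with i
  exact congrArg V ((default : HilbertBasis ι 𝕜 ℓ²(ι, 𝕜)).repr_symm_single i).symm

end

theorem Complex.ofReal_sqrt_two_mul_self : (√2 : ℂ) * √2 = 2 := by
  exact_mod_cast Real.mul_self_sqrt zero_le_two

-- `𝐞 n` is the paper's basis vector `e_{−n}` of `ℓ²(ℤ_{≤0})`.
local notation:max "𝐞" n:max => lp.single (E := fun _ : ℕ => ℂ) 2 n (1 : ℂ)

structure IsVTilde (z : ℂ) (V : ℓ²(ℕ, ℂ) →L[ℂ] ℓ²(ℕ, ℂ)) : Prop where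
  apply_of_three_le : ∀ n, 3 ≤ n → V 𝐞 n = 𝐞 (n + 1)
  apply_two : V 𝐞 2 = (√2 : ℂ)⁻¹ • 𝐞 3 - (√2 : ℂ)⁻¹ • 𝐞 0
  apply_one : V 𝐞 1 = (z / √2) • 𝐞 3 + (z / √2) • 𝐞 0
  apply_zero : V 𝐞 0 = (z / √2) • 𝐞 2 + (√2 : ℂ)⁻¹ • 𝐞 1

namespace IsVTilde

variable {z : ℂ} {V : ℓ²(ℕ, ℂ) →L[ℂ] ℓ²(ℕ, ℂ)}

theorem apply_add_three (hV : IsVTilde z V) (n : ℕ) : V 𝐞 (n + 3) = 𝐞 (n + 4) :=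
  hV.apply_of_three_le (n + 3) (Nat.le_add_left 3 n)

theorem orthonormal (hV : IsVTilde z V) (hz : ‖z‖ = 1) : Orthonormal ℂ fun n => V 𝐞 n := by
  have hzz : conj z * z = 1 := by
    rw [Complex.conj_mul', hz]; norm_num
  rw [orthonormal_iff_ite]
  intro i j
  rcases i with _ | _ | _ | i <;> rcases j with _ | _ | _ | j <;>
    simp only [hV.apply_zero, hV.apply_one, hV.apply_two, hV.apply_add_three, inner_add_left,
      inner_add_right, inner_sub_left, inner_sub_right, inner_smul_left, inner_smul_right,
      lp.inner_single_left, lp.single_apply, Pi.single_apply] <;>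
    simp +arith <;>
    grind [Complex.ofReal_sqrt_two_mul_self]

theorem apply_apply_zero (hV : IsVTilde z V) : V (V 𝐞 0) = z • 𝐞 3 := by
  rw [hV.apply_zero, map_add, map_smul, map_smul, hV.apply_one, hV.apply_two]
  match_scalars <;> grind [Complex.ofReal_sqrt_two_mul_self]

theorem pow_add_two_apply_zero (hV : IsVTilde z V) (m : ℕ) :
    (V ^ (m + 2)) 𝐞 0 = z • 𝐞 (m + 3) := by
  induction m with
  | zero => exact hV.apply_apply_zero
  | succ m ih => rw [pow_succ', mul_apply_eq_comp, ih, map_smul, hV.apply_add_three]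

theorem pow_apply_zero_apply_zero (hV : IsVTilde z V) {n : ℕ} (hn : 1 ≤ n) :
    (V ^ n) 𝐞 0 0 = 0 := by
  obtain _ | _ | m := n
  · omega
  · simp only [zero_add, pow_one, hV.apply_zero, lp.coeFn_add, lp.coeFn_smul, Pi.add_apply,
      Pi.smul_apply]
    simp [lp.single_apply]
  · simp only [hV.pow_add_two_apply_zero, lp.coeFn_smul, Pi.smul_apply]
    simp [lp.single_apply]

theorem apply_apply_zero_apply_zero {w : ℂ} {W : ℓ²(ℕ, ℂ) →L[ℂ] ℓ²(ℕ, ℂ)} (hV : IsVTilde z V)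
    (hW : IsVTilde w W) : W (V 𝐞 0) 0 = (w - z) / 2 := by
  simp only [hV.apply_zero, map_add, map_smul, hW.apply_one, hW.apply_two, lp.coeFn_add,
    lp.coeFn_sub, lp.coeFn_smul, Pi.add_apply, Pi.sub_apply, Pi.smul_apply]
  simp [lp.single_apply]
  grind [Complex.ofReal_sqrt_two_mul_self]

end IsVTilde

/-- The paper's example of a non-uniform minimal isometric dilation of the zero
pencil on `ℂ`: in `ℓ²(ℤ_{≤0}, ℂ)` (indexed here by `ℕ`, with `e n`
corresponding to `e_{−n}`), define `Ṽ(λ)` by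
`Ṽ(λ)e_{−n} = e_{−n−1}` for `n ≥ 3`,
`Ṽ(λ)e_{−2} = (1/√2)e_{−3} − (1/√2)e_0`,
`Ṽ(λ)e_{−1} = (λ/√2)e_{−3} + (λ/√2)e_0`,
`Ṽ(λ)e_0 = (λ/√2)e_{−2} + (1/√2)e_{−1}` (per the matrix in the paper).
Then each `Ṽ(λ)` is an isometry and `P_{ℂe₀}Ṽ(λ)ⁿe₀ = 0` for all `n ≥ 1`
(so `Ṽ` is an isometric dilation of the zero pencil), yet
`P_{ℂe₀}Ṽ(−1)Ṽ(1)e₀ = −e₀ ≠ 0`, so the dilation is not uniform. -/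
theorem nonuniform_minimal_isometric_dilation_example
    (W : ℂ → (lp (fun _ : ℕ => ℂ) 2 →L[ℂ] lp (fun _ : ℕ => ℂ) 2))
    (hshift : ∀ z : ℂ, ‖z‖ = 1 → ∀ n : ℕ, 3 ≤ n →
      W z (lp.single 2 n (1 : ℂ)) = lp.single 2 (n + 1) (1 : ℂ))
    (h2 : ∀ z : ℂ, ‖z‖ = 1 →
      W z (lp.single 2 2 (1 : ℂ))
        = ((Real.sqrt 2 : ℂ))⁻¹ • lp.single 2 3 (1 : ℂ)
          - ((Real.sqrt 2 : ℂ))⁻¹ • lp.single 2 0 (1 : ℂ))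
    (h1 : ∀ z : ℂ, ‖z‖ = 1 →
      W z (lp.single 2 1 (1 : ℂ))
        = (z / (Real.sqrt 2 : ℂ)) • lp.single 2 3 (1 : ℂ)
          + (z / (Real.sqrt 2 : ℂ)) • lp.single 2 0 (1 : ℂ))
    (h0 : ∀ z : ℂ, ‖z‖ = 1 →
      W z (lp.single 2 0 (1 : ℂ))
        = (z / (Real.sqrt 2 : ℂ)) • lp.single 2 2 (1 : ℂ)
          + ((Real.sqrt 2 : ℂ))⁻¹ • lp.single 2 1 (1 : ℂ)) :
    (∀ z : ℂ, ‖z‖ = 1 →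
      (∀ x, ‖W z x‖ = ‖x‖) ∧
      (∀ n : ℕ, 1 ≤ n → ((W z ^ n) (lp.single 2 0 (1 : ℂ))) 0 = 0)) ∧
    ((W (-1)) ((W 1) (lp.single 2 0 (1 : ℂ)))) 0 = -1 := by
  have hV : ∀ z : ℂ, ‖z‖ = 1 → IsVTilde z (W z) := fun z hz =>
    ⟨hshift z hz, h2 z hz, h1 z hz, h0 z hz⟩
  refine ⟨fun z hz => ⟨lp.norm_map_of_orthonormal_single ((hV z hz).orthonormal hz),
    fun n hn => (hV z hz).pow_apply_zero_apply_zero hn⟩, ?_⟩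
  rw [(hV 1 norm_one).apply_apply_zero_apply_zero (hV (-1) (by simp))]
  norm_num
end
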